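/- arXiv:1708.05105 — 3 statements merged into one kernel-verified Lean document; each statement's English description precedes it below -/
import Mathlib

section
/- Let B be a finite set with an injective weight map wt : B → Λ (i.e. B is multiplicity-free: at most one element of each weight), and suppose (wt, e_i, f_i) and (wt, e'_i, f'_i) are two semi-normal crystal structures on B having the same weight map wt. Then e_i = e'_i and f_i = f'_i for every i ∈ I. Equivalently, any weight-preserving bijection from a multiplicity-free semi-normal crystal to a semi-normal crystal is an isomorphism of crystals. (In the paper the first crystal is assumed normal; every normal crystal is semi-normal and the proof uses only semi-normality.) -/
/-- `k`-fold iterate of a partially defined map `g : B → Option B` (with `g(0) = 0`). -/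
def iterOpt {B : Type*} (g : B → Option B) : ℕ → B → Option B
  | 0, b => some b
  | k + 1, b => (g b).bind (iterOpt g k)

/-- The length of the `g`-string through `b`: the largest `k` with `g^k(b) ≠ 0`.
(For the crystal operators of a finite crystal this set is bounded, so the
supremum is attained.) -/
noncomputable def stringLen {B : Type*} (g : B → Option B) (b : B) : ℕ :=
  sSup {k | iterOpt g k b ≠ none}

/-- A pre-crystal: a finite set `B` together with a weight map `wt : B → Λ` and partially
defined operators `e_i, f_i : B → B ⊔ {0}` for `i ∈ I`. -/
structure PreCrystal (I : Type*) (Λ : Type*) (B : Type*) where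
  wt : B → Λ
  e : I → B → Option B
  f : I → B → Option B

/-- The crystal axioms (1)–(4): `e_i` raises the weight by `α_i`, `f_i` lowers it by `α_i`,
and `e_i`, `f_i` are partially inverse bijections. -/
def PreCrystal.IsCrystal {I Λ B : Type*} [AddCommGroup Λ] (α : I → Λ)
    (K : PreCrystal I Λ B) : Prop :=
  (∀ i b b', K.e i b = some b' → K.wt b' = K.wt b + α i) ∧
  (∀ i b b', K.f i b = some b' → K.wt b' = K.wt b - α i) ∧
  (∀ i b b', K.e i b = some b' → K.f i b' = some b) ∧
  (∀ i b b', K.f i b = some b' → K.e i b' = some b)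

/-- `ε_i(b) = max{k : e_i^k(b) ≠ 0}`. -/
noncomputable def PreCrystal.eps {I Λ B : Type*} (K : PreCrystal I Λ B) (i : I) (b : B) : ℕ :=
  stringLen (K.e i) b

/-- `φ_i(b) = max{k : f_i^k(b) ≠ 0}`. -/
noncomputable def PreCrystal.phi {I Λ B : Type*} (K : PreCrystal I Λ B) (i : I) (b : B) : ℕ :=
  stringLen (K.f i) b

/-- Semi-normality: `φ_i(b) − ε_i(b) = ⟨α_i^∨, wt(b)⟩` for all `i`, `b`. -/
def PreCrystal.SemiNormal {I Λ B : Type*} [AddCommGroup Λ] (c : I → Λ →+ ℤ)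
    (K : PreCrystal I Λ B) : Prop :=
  ∀ i b, (K.phi i b : ℤ) - (K.eps i b : ℤ) = c i (K.wt b)

/-
A semi-normal crystal with injective weight map is determined by its weights: `e_i b = b₁`
exactly when `wt b₁ = wt b + α_i`. If such a `b₁` existed with `e_i b = 0`, then `ε_i(b) = 0`,
so semi-normality gives `⟨α_i^∨, wt b⟩ ≥ 0` and hence `φ_i(b₁) ≥ 2`; thus `f_i b₁ ≠ 0`, and
by injectivity `f_i b₁ = b`, forcing `e_i b = b₁`.
-/

lemma stringLen_eq_zero_of_eq_none {B : Type*} {g : B → Option B} {b : B} (h : g b = none) :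
    stringLen g b = 0 := by
  have hs : {k | iterOpt g k b ≠ none} = {0} := by
    ext k
    cases k with
    | zero => simp [iterOpt]
    | succ n => simp [iterOpt, h]
  rw [stringLen, hs, csSup_singleton]

namespace PreCrystal

variable {I Λ B : Type*} [AddCommGroup Λ] {α : I → Λ} {c : I → Λ →+ ℤ} {K : PreCrystal I Λ B}

lemma e_eq_some_of_wt_eq (hc : ∀ i, c i (α i) = 2) (hK : K.IsCrystal α) (hsn : K.SemiNormal c)
    (hinj : Function.Injective K.wt) {i : I} {b b₁ : B} (h : K.wt b₁ = K.wt b + α i) :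
    K.e i b = some b₁ := by
  obtain ⟨he, hf, -, hfe⟩ := hK
  cases hb : K.e i b with
  | some x => exact congrArg some (hinj ((he i b x hb).trans h.symm))
  | none =>
    have heps : K.eps i b = 0 := stringLen_eq_zero_of_eq_none hb
    have hphi : K.phi i b₁ ≠ 0 := by
      have hsn_b := hsn i b
      have hsn_b₁ := hsn i b₁
      rw [heps] at hsn_b
      rw [h, map_add, hc] at hsn_b₁
      omega
    obtain ⟨y, hy⟩ := Option.ne_none_iff_exists'.mp
      fun h0 => hphi (stringLen_eq_zero_of_eq_none h0)
    have hyb : y = b := hinj (by rw [hf i b₁ y hy, h, add_sub_cancel_right])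
    rw [hyb] at hy
    simpa [hb] using hfe i b₁ b hy

lemma e_eq_some_iff (hc : ∀ i, c i (α i) = 2) (hK : K.IsCrystal α) (hsn : K.SemiNormal c)
    (hinj : Function.Injective K.wt) {i : I} {b b₁ : B} :
    K.e i b = some b₁ ↔ K.wt b₁ = K.wt b + α i :=
  ⟨hK.1 i b b₁, e_eq_some_of_wt_eq hc hK hsn hinj⟩

lemma f_eq_some_iff (hc : ∀ i, c i (α i) = 2) (hK : K.IsCrystal α) (hsn : K.SemiNormal c)
    (hinj : Function.Injective K.wt) {i : I} {b b₁ : B} :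
    K.f i b = some b₁ ↔ K.wt b = K.wt b₁ + α i :=
  ⟨fun h => hK.1 i b₁ b (hK.2.2.2 i b b₁ h),
    fun h => hK.2.2.1 i b₁ b (e_eq_some_of_wt_eq hc hK hsn hinj h)⟩

end PreCrystal

theorem multiplicityFree_semiNormal_unique_general
    {I Λ B : Type*} [AddCommGroup Λ]
    (α : I → Λ) (c : I → Λ →+ ℤ) (hc : ∀ i, c i (α i) = 2)
    (K K' : PreCrystal I Λ B)
    (hwt : K.wt = K'.wt) (hinj : Function.Injective K.wt)
    (hK : K.IsCrystal α) (hK' : K'.IsCrystal α)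
    (hsn : K.SemiNormal c) (hsn' : K'.SemiNormal c) :
    K.e = K'.e ∧ K.f = K'.f := by
  have hinj' : Function.Injective K'.wt := hwt ▸ hinj
  constructor
  · funext i b
    exact Option.ext fun b₁ => by
      rw [PreCrystal.e_eq_some_iff hc hK hsn hinj, PreCrystal.e_eq_some_iff hc hK' hsn' hinj', hwt]
  · funext i b
    exact Option.ext fun b₁ => by
      rw [PreCrystal.f_eq_some_iff hc hK hsn hinj, PreCrystal.f_eq_some_iff hc hK' hsn' hinj', hwt]

/-- A multiplicity-free semi-normal crystal structure is determined by its weight map: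
if two semi-normal crystal structures on a finite set `B` share the same injective weight
map, then their crystal operators coincide. Equivalently, a weight-preserving bijection
from a multiplicity-free semi-normal crystal to a semi-normal crystal is an isomorphism
of crystals. -/
theorem multiplicityFree_semiNormal_unique
    {I Λ B : Type*} [Fintype I] [AddCommGroup Λ] [Fintype B]
    (α : I → Λ) (c : I → Λ →+ ℤ) (hc : ∀ i, c i (α i) = 2)
    (K K' : PreCrystal I Λ B)
    (hwt : K.wt = K'.wt) (hinj : Function.Injective K.wt)
    (hK : K.IsCrystal α) (hK' : K'.IsCrystal α)
    (hsn : K.SemiNormal c) (hsn' : K'.SemiNormal c) :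
    K.e = K'.e ∧ K.f = K'.f :=
  multiplicityFree_semiNormal_unique_general α c hc K K' hwt hinj hK hK' hsn hsn'
end

section
/- For any two crystals B₁ and B₂, the tensor product B₁ ⊗ B₂ is again a crystal: the maps wt, e_i, f_i defined by the tensor product rule satisfy the crystal axioms (1)–(4). Moreover, if B₁ and B₂ are semi-normal crystals, then B₁ ⊗ B₂ is a semi-normal crystal. -/
/-- The tensor product of two pre-crystals: the underlying set is `B₁ × B₂`,
`wt(b₁, b₂) = wt(b₁) + wt(b₂)`, and the operators are given by the tensor product rule
(any pair with a `0` entry being `0`). -/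
noncomputable def PreCrystal.tensor {I Λ B₁ B₂ : Type*} [AddCommGroup Λ]
    (K₁ : PreCrystal I Λ B₁) (K₂ : PreCrystal I Λ B₂) : PreCrystal I Λ (B₁ × B₂) where
  wt := fun p => K₁.wt p.1 + K₂.wt p.2
  e := fun i p =>
    if K₁.eps i p.1 > K₂.phi i p.2 then (K₁.e i p.1).map (fun b => (b, p.2))
    else (K₂.e i p.2).map (fun b => (p.1, b))
  f := fun i p =>
    if K₁.eps i p.1 ≥ K₂.phi i p.2 then (K₁.f i p.1).map (fun b => (b, p.2))
    else (K₂.f i p.2).map (fun b => (p.1, b))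


/-!
In a finite crystal `c_i(wt b)` strictly increases along `e_i` and decreases along `f_i`, so
`i`-strings cannot cycle: `ε_i(b) = 0` if `e_i b = 0` and `ε_i(b) = ε_i(e_i b) + 1` otherwise, and
this recursion determines `ε_i` (likewise `φ_i`). It turns the tensor product axioms into a case
check, and verifying it for the candidates `ε_i(b₁ ⊗ b₂) = ε_i(b₂) + (ε_i(b₁) ∸ φ_i(b₂))` and
`φ_i(b₁ ⊗ b₂) = φ_i(b₁) + (φ_i(b₂) ∸ ε_i(b₁))` proves these formulas. Semi-normality follows
since `(a ∸ b) − (b ∸ a) = a − b`.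
-/

section StringLen

variable {B : Type*} {g : B → Option B}

lemma iterOpt_succ_of_eq_some {b b' : B} (hb : g b = some b') (k : ℕ) :
    iterOpt g (k + 1) b = iterOpt g k b' := by
  simp [iterOpt, hb]

lemma stringLen_of_eq_none {b : B} (hb : g b = none) : stringLen g b = 0 := by
  refine IsGreatest.csSup_eq ⟨by simp [iterOpt], ?_⟩
  rintro (_ | k) hk
  · exact le_rfl
  · simp [iterOpt, hb] at hk

lemma stringLen_of_eq_some {b b' : B} (hb : g b = some b')
    (hbdd : BddAbove {k | iterOpt g k b' ≠ none}) : stringLen g b = stringLen g b' + 1 := by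
  refine IsGreatest.csSup_eq ⟨?_, ?_⟩
  · rw [Set.mem_ofPred_eq, iterOpt_succ_of_eq_some hb]
    exact Nat.sSup_mem ⟨0, by simp [iterOpt]⟩ hbdd
  · rintro (_ | k) hk
    · exact Nat.zero_le _
    · rw [Set.mem_ofPred_eq, iterOpt_succ_of_eq_some hb] at hk
      exact Nat.succ_le_succ (le_csSup hbdd hk)

lemma stringLen_eq_of_recursion (hbdd : ∀ b, BddAbove {k | iterOpt g k b ≠ none})
    (F : B → ℕ) (h_none : ∀ b, g b = none → F b = 0)
    (h_some : ∀ b b', g b = some b' → F b = F b' + 1) (b : B) : stringLen g b = F b := by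
  induction hF : F b generalizing b with
  | zero =>
    cases hb : g b with
    | none => exact stringLen_of_eq_none hb
    | some b' => have := h_some b b' hb; omega
  | succ n ih =>
    cases hb : g b with
    | none => have := h_none b hb; omega
    | some b' =>
      rw [stringLen_of_eq_some hb (hbdd b'), ih b' (by have := h_some b b' hb; omega)]

lemma add_le_of_iterOpt_eq_some {w : B → ℤ} (hw : ∀ x y, g x = some y → w x < w y) :
    ∀ {k : ℕ} {b b' : B}, iterOpt g k b = some b' → w b + k ≤ w b'
  | 0, b, b', h => by cases h; simp
  | k + 1, b, b', h => by
    cases hb : g b with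
    | none => simp [iterOpt, hb] at h
    | some x =>
      rw [iterOpt_succ_of_eq_some hb] at h
      have := hw b x hb
      have := add_le_of_iterOpt_eq_some hw h
      push_cast
      omega

lemma bddAbove_iterOpt_ne_none [Finite B] {w : B → ℤ}
    (hw : ∀ x y, g x = some y → w x < w y) (b : B) :
    BddAbove {k | iterOpt g k b ≠ none} := by
  obtain ⟨M, hM⟩ := (Set.finite_range w).bddAbove
  refine ⟨(M - w b).toNat, fun k hk => ?_⟩
  obtain ⟨b', hb'⟩ := Option.ne_none_iff_exists'.mp hk
  have := add_le_of_iterOpt_eq_some hw hb'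
  have := hM (Set.mem_range_self b')
  omega

end StringLen

namespace PreCrystal.IsCrystal

variable {I Λ B : Type*} [AddCommGroup Λ] [Finite B] {α : I → Λ} {c : I → Λ →+ ℤ}
  {K : PreCrystal I Λ B} {i : I} {b b' : B}

lemma bddAbove_e (h : K.IsCrystal α) (hc : ∀ i, c i (α i) = 2) (i : I) (b : B) :
    BddAbove {k | iterOpt (K.e i) k b ≠ none} :=
  bddAbove_iterOpt_ne_none (w := fun x => c i (K.wt x))
    (fun x y hxy => by simp only [h.1 i x y hxy, map_add, hc]; omega) b

lemma bddAbove_f (h : K.IsCrystal α) (hc : ∀ i, c i (α i) = 2) (i : I) (b : B) :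
    BddAbove {k | iterOpt (K.f i) k b ≠ none} :=
  bddAbove_iterOpt_ne_none (w := fun x => -c i (K.wt x))
    (fun x y hxy => by simp only [h.2.1 i x y hxy, map_sub, hc]; omega) b

lemma eps_eq_succ (h : K.IsCrystal α) (hc : ∀ i, c i (α i) = 2) (hb : K.e i b = some b') :
    K.eps i b = K.eps i b' + 1 :=
  stringLen_of_eq_some hb (h.bddAbove_e hc i b')

lemma phi_eq_succ (h : K.IsCrystal α) (hc : ∀ i, c i (α i) = 2) (hb : K.f i b = some b') :
    K.phi i b = K.phi i b' + 1 :=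
  stringLen_of_eq_some hb (h.bddAbove_f hc i b')

lemma phi_eq_succ_of_e (h : K.IsCrystal α) (hc : ∀ i, c i (α i) = 2)
    (hb : K.e i b = some b') : K.phi i b' = K.phi i b + 1 :=
  h.phi_eq_succ hc (h.2.2.1 i b b' hb)

lemma eps_eq_succ_of_f (h : K.IsCrystal α) (hc : ∀ i, c i (α i) = 2)
    (hb : K.f i b = some b') : K.eps i b' = K.eps i b + 1 :=
  h.eps_eq_succ hc (h.2.2.2 i b b' hb)

end PreCrystal.IsCrystal

namespace PreCrystal

variable {I Λ B₁ B₂ : Type*} [AddCommGroup Λ] {α : I → Λ} {c : I → Λ →+ ℤ}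
  {K₁ : PreCrystal I Λ B₁} {K₂ : PreCrystal I Λ B₂} {i : I} {x : B₁} {y : B₂}

lemma tensor_wt (x : B₁) (y : B₂) : (K₁.tensor K₂).wt (x, y) = K₁.wt x + K₂.wt y := rfl

lemma tensor_e_of_lt (hxy : K₂.phi i y < K₁.eps i x) :
    (K₁.tensor K₂).e i (x, y) = (K₁.e i x).map (·, y) :=
  if_pos hxy

lemma tensor_e_of_le (hxy : K₁.eps i x ≤ K₂.phi i y) :
    (K₁.tensor K₂).e i (x, y) = (K₂.e i y).map (x, ·) :=
  if_neg (not_lt.mpr hxy)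

lemma tensor_f_of_le (hxy : K₂.phi i y ≤ K₁.eps i x) :
    (K₁.tensor K₂).f i (x, y) = (K₁.f i x).map (·, y) :=
  if_pos hxy

lemma tensor_f_of_lt (hxy : K₁.eps i x < K₂.phi i y) :
    (K₁.tensor K₂).f i (x, y) = (K₂.f i y).map (x, ·) :=
  if_neg (not_le.mpr hxy)

variable [Finite B₁] [Finite B₂]

lemma tensor_isCrystal (hc : ∀ i, c i (α i) = 2) (h₁ : K₁.IsCrystal α)
    (h₂ : K₂.IsCrystal α) : (K₁.tensor K₂).IsCrystal α := by
  refine ⟨?_, ?_, ?_, ?_⟩ <;> rintro i ⟨x, y⟩ p hp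
  · rcases lt_or_ge (K₂.phi i y) (K₁.eps i x) with hxy | hxy
    · rw [tensor_e_of_lt hxy, Option.map_eq_some_iff] at hp
      obtain ⟨x', hx', rfl⟩ := hp
      simp only [tensor_wt, h₁.1 i x x' hx']
      abel
    · rw [tensor_e_of_le hxy, Option.map_eq_some_iff] at hp
      obtain ⟨y', hy', rfl⟩ := hp
      simp only [tensor_wt, h₂.1 i y y' hy']
      abel
  · rcases le_or_gt (K₂.phi i y) (K₁.eps i x) with hxy | hxy
    · rw [tensor_f_of_le hxy, Option.map_eq_some_iff] at hp
      obtain ⟨x', hx', rfl⟩ := hp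
      simp only [tensor_wt, h₁.2.1 i x x' hx']
      abel
    · rw [tensor_f_of_lt hxy, Option.map_eq_some_iff] at hp
      obtain ⟨y', hy', rfl⟩ := hp
      simp only [tensor_wt, h₂.2.1 i y y' hy']
      abel
  · rcases lt_or_ge (K₂.phi i y) (K₁.eps i x) with hxy | hxy
    · rw [tensor_e_of_lt hxy, Option.map_eq_some_iff] at hp
      obtain ⟨x', hx', rfl⟩ := hp
      have := h₁.eps_eq_succ hc hx'
      rw [tensor_f_of_le (by omega), h₁.2.2.1 i x x' hx', Option.map_some]
    · rw [tensor_e_of_le hxy, Option.map_eq_some_iff] at hp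
      obtain ⟨y', hy', rfl⟩ := hp
      have := h₂.phi_eq_succ_of_e hc hy'
      rw [tensor_f_of_lt (by omega), h₂.2.2.1 i y y' hy', Option.map_some]
  · rcases le_or_gt (K₂.phi i y) (K₁.eps i x) with hxy | hxy
    · rw [tensor_f_of_le hxy, Option.map_eq_some_iff] at hp
      obtain ⟨x', hx', rfl⟩ := hp
      have := h₁.eps_eq_succ_of_f hc hx'
      rw [tensor_e_of_lt (by omega), h₁.2.2.2 i x x' hx', Option.map_some]
    · rw [tensor_f_of_lt hxy, Option.map_eq_some_iff] at hp
      obtain ⟨y', hy', rfl⟩ := hp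
      have := h₂.phi_eq_succ hc hy'
      rw [tensor_e_of_le (by omega), h₂.2.2.2 i y y' hy', Option.map_some]

lemma tensor_eps (hc : ∀ i, c i (α i) = 2) (h₁ : K₁.IsCrystal α) (h₂ : K₂.IsCrystal α)
    (i : I) (x : B₁) (y : B₂) :
    (K₁.tensor K₂).eps i (x, y) = K₂.eps i y + (K₁.eps i x - K₂.phi i y) := by
  refine stringLen_eq_of_recursion ((tensor_isCrystal hc h₁ h₂).bddAbove_e hc i)
    (fun p => K₂.eps i p.2 + (K₁.eps i p.1 - K₂.phi i p.2)) ?_ ?_ (x, y)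
  · rintro ⟨x, y⟩ hp
    rcases lt_or_ge (K₂.phi i y) (K₁.eps i x) with hxy | hxy
    · rw [tensor_e_of_lt hxy, Option.map_eq_none_iff] at hp
      have : K₁.eps i x = 0 := stringLen_of_eq_none hp
      omega
    · rw [tensor_e_of_le hxy, Option.map_eq_none_iff] at hp
      have : K₂.eps i y = 0 := stringLen_of_eq_none hp
      simp only
      omega
  · rintro ⟨x, y⟩ p hp
    rcases lt_or_ge (K₂.phi i y) (K₁.eps i x) with hxy | hxy
    · rw [tensor_e_of_lt hxy, Option.map_eq_some_iff] at hp
      obtain ⟨x', hx', rfl⟩ := hp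
      have := h₁.eps_eq_succ hc hx'
      simp only
      omega
    · rw [tensor_e_of_le hxy, Option.map_eq_some_iff] at hp
      obtain ⟨y', hy', rfl⟩ := hp
      have := h₂.eps_eq_succ hc hy'
      have := h₂.phi_eq_succ_of_e hc hy'
      simp only
      omega

lemma tensor_phi (hc : ∀ i, c i (α i) = 2) (h₁ : K₁.IsCrystal α) (h₂ : K₂.IsCrystal α)
    (i : I) (x : B₁) (y : B₂) :
    (K₁.tensor K₂).phi i (x, y) = K₁.phi i x + (K₂.phi i y - K₁.eps i x) := by
  refine stringLen_eq_of_recursion ((tensor_isCrystal hc h₁ h₂).bddAbove_f hc i)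
    (fun p => K₁.phi i p.1 + (K₂.phi i p.2 - K₁.eps i p.1)) ?_ ?_ (x, y)
  · rintro ⟨x, y⟩ hp
    rcases le_or_gt (K₂.phi i y) (K₁.eps i x) with hxy | hxy
    · rw [tensor_f_of_le hxy, Option.map_eq_none_iff] at hp
      have : K₁.phi i x = 0 := stringLen_of_eq_none hp
      simp only
      omega
    · rw [tensor_f_of_lt hxy, Option.map_eq_none_iff] at hp
      have : K₂.phi i y = 0 := stringLen_of_eq_none hp
      omega
  · rintro ⟨x, y⟩ p hp
    rcases le_or_gt (K₂.phi i y) (K₁.eps i x) with hxy | hxy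
    · rw [tensor_f_of_le hxy, Option.map_eq_some_iff] at hp
      obtain ⟨x', hx', rfl⟩ := hp
      have := h₁.phi_eq_succ hc hx'
      have := h₁.eps_eq_succ_of_f hc hx'
      simp only
      omega
    · rw [tensor_f_of_lt hxy, Option.map_eq_some_iff] at hp
      obtain ⟨y', hy', rfl⟩ := hp
      have := h₂.phi_eq_succ hc hy'
      simp only
      omega

end PreCrystal

theorem tensor_isCrystal_and_semiNormal_general
    {I Λ B₁ B₂ : Type*} [AddCommGroup Λ] [Fintype B₁] [Fintype B₂]
    (α : I → Λ) (c : I → Λ →+ ℤ) (hc : ∀ i, c i (α i) = 2)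
    (K₁ : PreCrystal I Λ B₁) (K₂ : PreCrystal I Λ B₂)
    (h₁ : K₁.IsCrystal α) (h₂ : K₂.IsCrystal α) :
    (K₁.tensor K₂).IsCrystal α ∧
      (K₁.SemiNormal c → K₂.SemiNormal c → (K₁.tensor K₂).SemiNormal c) := by
  refine ⟨PreCrystal.tensor_isCrystal hc h₁ h₂, fun s₁ s₂ i ⟨x, y⟩ => ?_⟩
  rw [PreCrystal.tensor_eps hc h₁ h₂, PreCrystal.tensor_phi hc h₁ h₂, PreCrystal.tensor_wt,
    map_add, ← s₁ i x, ← s₂ i y]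
  omega

/-- The tensor product of two crystals is again a crystal, and the tensor product of two
semi-normal crystals is semi-normal. -/
theorem tensor_isCrystal_and_semiNormal
    {I Λ B₁ B₂ : Type*} [Fintype I] [AddCommGroup Λ] [Fintype B₁] [Fintype B₂]
    (α : I → Λ) (c : I → Λ →+ ℤ) (hc : ∀ i, c i (α i) = 2)
    (K₁ : PreCrystal I Λ B₁) (K₂ : PreCrystal I Λ B₂)
    (h₁ : K₁.IsCrystal α) (h₂ : K₂.IsCrystal α) :
    (K₁.tensor K₂).IsCrystal α ∧
      (K₁.SemiNormal c → K₂.SemiNormal c → (K₁.tensor K₂).SemiNormal c) :=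
  tensor_isCrystal_and_semiNormal_general α c hc K₁ K₂ h₁ h₂
end

section
/- Let L be a finite-dimensional semisimple Lie algebra over ℂ, (x_a) a basis of L and (x^a) the dual basis with respect to the Killing form κ (i.e. κ(x_a, x^b) = δ_a^b). Fix n ≥ 2 and work in the universal enveloping algebra U(L^{⊕n}) of the direct sum of n copies of L; for y ∈ L and 1 ≤ i ≤ n let y^{(i)} ∈ U(L^{⊕n}) denote the image of y placed in the i-th summand, and set Ω^{(ij)} = Σ_a x_a^{(i)} · (x^a)^{(j)} for i ≠ j. Let z_1,…,z_n be pairwise distinct complex numbers and let χ ∈ L. Define the Gaudin Hamiltonians H_i = Σ_{j ≠ i} (z_i − z_j)^{-1} Ω^{(ij)} + χ^{(i)} ∈ U(L^{⊕n}) for i = 1,…,n. Then the H_i pairwise commute: H_i H_j = H_j H_i for all i, j. (In the paper χ is a real regular Cartan element and this follows from the fact that the H_i lie in the commutative inhomogeneous Gaudin algebra A_χ(z₁,…,z_n); the commutativity holds for arbitrary χ ∈ L.) -/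
open UniversalEnvelopingAlgebra

variable {L : Type*} [LieRing L] [LieAlgebra ℂ L]

/-- The image `y^{(i)}` in `U(L^{⊕n})` of `y ∈ L` placed in the `i`-th summand
(the direct sum of `n` copies of `L` is realized as `⨁ _ : Fin n, L`). -/
noncomputable def inSummand (n : ℕ) (i : Fin n) (y : L) :
    UniversalEnvelopingAlgebra ℂ (DirectSum (Fin n) fun _ => L) :=
  ι ℂ (DirectSum.lieAlgebraOf ℂ (Fin n) (fun _ => L) i y)

/-- The split Casimir element `Ω^{(ij)} = Σ_a x_a^{(i)} (x^a)^{(j)} ∈ U(L^{⊕n})` attached to a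
basis `(x_a)` of `L` and its Killing-dual family `(x^a)`, placed in the `i`-th and `j`-th
factors. -/
noncomputable def splitCasimirIJ (n : ℕ) {ιB : Type*} [Fintype ιB]
    (bas : Module.Basis ιB ℂ L) (dbas : ιB → L) (i j : Fin n) :
    UniversalEnvelopingAlgebra ℂ (DirectSum (Fin n) fun _ => L) :=
  ∑ a : ιB, inSummand n i (bas a) * inSummand n j (dbas a)

/-- The Gaudin Hamiltonian `H_i = Σ_{j ≠ i} (z_i − z_j)⁻¹ Ω^{(ij)} + χ^{(i)} ∈ U(L^{⊕n})`. -/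
noncomputable def gaudinHamiltonian (n : ℕ) {ιB : Type*} [Fintype ιB]
    (bas : Module.Basis ιB ℂ L) (dbas : ιB → L) (z : Fin n → ℂ) (χ : L) (i : Fin n) :
    UniversalEnvelopingAlgebra ℂ (DirectSum (Fin n) fun _ => L) :=
  (∑ j ∈ Finset.univ.erase i, (z i - z j)⁻¹ • splitCasimirIJ n bas dbas i j) +
    inSummand n i χ

/-! The split Casimir `Ω^{(ij)}` is symmetric and `L`-invariant,
`[y^{(i)} + y^{(j)}, Ω^{(ij)}] = 0`, because the Killing form is symmetric and invariant.
Invariance gives the infinitesimal Yang–Baxter relation `[Ω^{(ij)}, Ω^{(ik)} + Ω^{(jk)}] = 0`, so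
for each third index `k` the brackets of `Ω^{(ij)}`, `Ω^{(ik)}`, `Ω^{(jk)}` that occur in
`[H_i, H_j]` are all `±[Ω^{(ij)}, Ω^{(ik)}]`, and their coefficients cancel by the partial-fraction
identity `1/((z_i - z_j)(z_j - z_k)) + 1/((z_j - z_k)(z_k - z_i)) + 1/((z_k - z_i)(z_i - z_j)) = 0`.
The `χ`-terms cancel by invariance of `Ω^{(ij)}` alone. -/

namespace LinearMap.BilinForm

section

variable {K V ι : Type*} [Field K] [AddCommGroup V] [Module K V] [Fintype ι] [DecidableEq ι]
  {B : LinearMap.BilinForm K V} {b : Module.Basis ι K V} {d : ι → V}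

theorem sum_apply_dual_smul_basis (hd : ∀ a c, B (b a) (d c) = if a = c then 1 else 0)
    (v : V) : ∑ a, B v (d a) • b a = v := by
  have hrepr : ∀ a, B v (d a) = b.repr v a := by
    intro a
    conv_lhs => rw [← b.sum_repr v]
    simp [map_sum, -Module.Basis.sum_repr, hd]
  simp_rw [hrepr]
  exact b.sum_repr v

theorem linearIndependent_of_apply_eq_ite
    (hd : ∀ a c, B (b a) (d c) = if a = c then 1 else 0) : LinearIndependent K d := by
  rw [Fintype.linearIndependent_iff]
  intro g hg a
  simpa [hd] using congrArg (B (b a)) hg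

theorem sum_apply_basis_smul_dual (hd : ∀ a c, B (b a) (d c) = if a = c then 1 else 0)
    (v : V) : ∑ a, B (b a) v • d a = v := by
  -- `d` is a basis, dual to `b` for `B.flip`: swap the roles in `sum_apply_dual_smul_basis`.
  have := Module.Finite.of_basis b
  let d' := basisOfLinearIndependentOfCardEqFinrank' d (linearIndependent_of_apply_eq_ite hd)
    (Module.finrank_eq_card_basis b).symm
  have hd' : ∀ a c, B.flip (d' a) (b c) = if a = c then 1 else 0 := by
    simp [d', hd, eq_comm]
  simpa [d'] using sum_apply_dual_smul_basis hd' v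

end

section

variable {K 𝔤 M ι : Type*} [Field K] [LieRing 𝔤] [LieAlgebra K 𝔤] [AddCommGroup M] [Module K M]
  [Fintype ι] [DecidableEq ι] {B : LinearMap.BilinForm K 𝔤} {b : Module.Basis ι K 𝔤} {d : ι → 𝔤}

theorem sum_map_lie_basis_dual_add_sum_map_basis_lie_dual (hB : B.lieInvariant 𝔤)
    (hd : ∀ a c, B (b a) (d c) = if a = c then 1 else 0) (φ : 𝔤 →ₗ[K] 𝔤 →ₗ[K] M) (y : 𝔤) :
    ∑ a, φ ⁅y, b a⁆ (d a) + ∑ a, φ (b a) ⁅y, d a⁆ = 0 := calc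
  _ = ∑ a, ∑ c, B ⁅y, b a⁆ (d c) • φ (b c) (d a)
        + ∑ a, ∑ c, B (b c) ⁅y, d a⁆ • φ (b a) (d c) := by
      congr 1 <;> refine Finset.sum_congr rfl fun a _ => ?_
      · conv_lhs => rw [← sum_apply_dual_smul_basis hd ⁅y, b a⁆]
        simp [map_sum]
      · conv_lhs => rw [← sum_apply_basis_smul_dual hd ⁅y, d a⁆]
        simp [map_sum]
  _ = ∑ a, ∑ c, (B ⁅y, b a⁆ (d c) + B (b a) ⁅y, d c⁆) • φ (b c) (d a) := by
      rw [Finset.sum_comm (s := Finset.univ) (t := Finset.univ)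
        (f := fun a c => B (b c) ⁅y, d a⁆ • φ (b a) (d c))]
      simp only [add_smul, Finset.sum_add_distrib]
  _ = 0 := by simp [hB y]

theorem sum_map_basis_dual_eq_sum_map_dual_basis (hB : B.IsSymm)
    (hd : ∀ a c, B (b a) (d c) = if a = c then 1 else 0) (φ : 𝔤 →ₗ[K] 𝔤 →ₗ[K] M) :
    ∑ a, φ (b a) (d a) = ∑ a, φ (d a) (b a) := calc
  _ = ∑ a, ∑ c, B (b c) (b a) • φ (d c) (d a) := by
      refine Finset.sum_congr rfl fun a _ => ?_
      conv_lhs => rw [← sum_apply_basis_smul_dual hd (b a)]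
      simp [map_sum]
  _ = ∑ a, ∑ c, B (b a) (b c) • φ (d a) (d c) := Finset.sum_comm
  _ = ∑ a, φ (d a) (b a) := by
      refine Finset.sum_congr rfl fun a _ => ?_
      conv_rhs => rw [← sum_apply_basis_smul_dual hd (b a)]
      simp [map_sum, hB.eq (b a)]

end

end LinearMap.BilinForm

attribute [local instance] LieRing.ofAssociativeRing

theorem Ring.lie_mul {A : Type*} [Ring A] (a b c : A) :
    ⁅a, b * c⁆ = ⁅a, b⁆ * c + b * ⁅a, c⁆ := by
  simp only [Ring.lie_def]
  noncomm_ring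

section SplitCasimir

variable {n : ℕ} {ιB : Type*} [Fintype ιB] {bas : Module.Basis ιB ℂ L} {dbas : ιB → L}

noncomputable def inSummandHom (n : ℕ) (i : Fin n) :
    L →ₗ⁅ℂ⁆ UniversalEnvelopingAlgebra ℂ (DirectSum (Fin n) fun _ => L) :=
  (ι ℂ).comp (DirectSum.lieAlgebraOf ℂ (Fin n) (fun _ => L) i)

noncomputable def inSummandMul (n : ℕ) (i j : Fin n) :
    L →ₗ[ℂ] L →ₗ[ℂ] UniversalEnvelopingAlgebra ℂ (DirectSum (Fin n) fun _ => L) :=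
  (LinearMap.mul ℂ _).compl₁₂ (inSummandHom (L := L) n i).toLinearMap
    (inSummandHom (L := L) n j).toLinearMap

@[simp]
theorem inSummandMul_apply (i j : Fin n) (u v : L) :
    inSummandMul n i j u v = inSummand n i u * inSummand n j v := rfl

theorem inSummand_lie (i : Fin n) (y w : L) :
    ⁅inSummand n i y, inSummand n i w⁆ = inSummand n i ⁅y, w⁆ :=
  ((inSummandHom n i).map_lie y w).symm

theorem commute_inSummand_of_ne {i j : Fin n} (hij : i ≠ j) (y w : L) :
    Commute (inSummand n i y) (inSummand n j w) := by
  rw [commute_iff_lie_eq, inSummand, inSummand, ← LieHom.map_lie, DirectSum.lieAlgebraOf_apply,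
    DirectSum.lieAlgebraOf_apply, DirectSum.lie_of_of_ne _ hij, map_zero]

theorem commute_inSummand_splitCasimirIJ {i j k : Fin n} (hki : k ≠ i) (hkj : k ≠ j) (y : L) :
    Commute (inSummand n k y) (splitCasimirIJ n bas dbas i j) :=
  .sum_right _ _ _ fun _ _ =>
    (commute_inSummand_of_ne hki _ _).mul_right (commute_inSummand_of_ne hkj _ _)

theorem lie_inSummand_add_inSummand_mul {i j : Fin n} (hij : i ≠ j) (y u v : L) :
    ⁅inSummand n i y + inSummand n j y, inSummand n i u * inSummand n j v⁆ =
      inSummand n i ⁅y, u⁆ * inSummand n j v + inSummand n i u * inSummand n j ⁅y, v⁆ := by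
  simp only [add_lie, Ring.lie_mul, inSummand_lie, (commute_inSummand_of_ne hij _ _).lie_eq,
    (commute_inSummand_of_ne hij.symm _ _).lie_eq, add_zero, zero_add]

theorem commute_splitCasimirIJ_of_disjoint {i j k l : Fin n}
    (hik : i ≠ k) (hil : i ≠ l) (hjk : j ≠ k) (hjl : j ≠ l) :
    Commute (splitCasimirIJ n bas dbas i j) (splitCasimirIJ n bas dbas k l) :=
  .sum_left _ _ _ fun _ _ =>
    (commute_inSummand_splitCasimirIJ hik hil _).mul_left
      (commute_inSummand_splitCasimirIJ hjk hjl _)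

variable [DecidableEq ιB]
  (hdual : ∀ a b : ιB, killingForm ℂ L (bas a) (dbas b) = if a = b then 1 else 0)
include hdual

theorem commute_inSummand_add_inSummand_splitCasimirIJ {i j : Fin n} (hij : i ≠ j) (y : L) :
    Commute (inSummand n i y + inSummand n j y) (splitCasimirIJ n bas dbas i j) := by
  rw [commute_iff_lie_eq, splitCasimirIJ, lie_sum]
  simp only [lie_inSummand_add_inSummand_mul hij, Finset.sum_add_distrib]
  simpa using LinearMap.BilinForm.sum_map_lie_basis_dual_add_sum_map_basis_lie_dual
    (LieModule.traceForm_lieInvariant ℂ L L) hdual (inSummandMul n i j) y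

theorem splitCasimirIJ_comm {i j : Fin n} (hij : i ≠ j) :
    splitCasimirIJ n bas dbas i j = splitCasimirIJ n bas dbas j i := by
  simp only [splitCasimirIJ, (commute_inSummand_of_ne hij.symm _ _).eq]
  simpa using LinearMap.BilinForm.sum_map_basis_dual_eq_sum_map_dual_basis
    ⟨LieModule.traceForm_comm ℂ L L⟩ hdual (inSummandMul n i j)

theorem commute_splitCasimirIJ_add_splitCasimirIJ {i j k : Fin n}
    (hij : i ≠ j) (hik : i ≠ k) (hjk : j ≠ k) :
    Commute (splitCasimirIJ n bas dbas i j)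
      (splitCasimirIJ n bas dbas i k + splitCasimirIJ n bas dbas j k) := by
  simp only [splitCasimirIJ, ← Finset.sum_add_distrib]
  refine .sum_right _ _ _ fun a _ => ?_
  rw [← add_mul]
  exact (commute_inSummand_add_inSummand_splitCasimirIJ hdual hij _).symm.mul_right
    (commute_inSummand_splitCasimirIJ hik.symm hjk.symm _).symm

end SplitCasimir

section Gaudin

variable {n : ℕ} {ιB : Type*} [Fintype ιB] {bas : Module.Basis ιB ℂ L}
  {dbas : ιB → L} {z : Fin n → ℂ}

theorem gaudinHamiltonian_eq_add_inSummand (χ : L) (i : Fin n) :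
    gaudinHamiltonian n bas dbas z χ i =
      gaudinHamiltonian n bas dbas z 0 i + inSummand n i χ := by
  simp [gaudinHamiltonian, inSummand]

theorem gaudinHamiltonian_zero_eq_add_sum {i j : Fin n} (hij : i ≠ j) :
    gaudinHamiltonian n bas dbas z 0 i = (z i - z j)⁻¹ • splitCasimirIJ n bas dbas i j +
      ∑ k ∈ (Finset.univ.erase i).erase j, (z i - z k)⁻¹ • splitCasimirIJ n bas dbas i k := by
  rw [gaudinHamiltonian,
    ← Finset.add_sum_erase _ _ (Finset.mem_erase.2 ⟨hij.symm, Finset.mem_univ j⟩)]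
  simp [inSummand]

theorem lie_gaudinHamiltonian_zero_inSummand {i j : Fin n} (hij : i ≠ j) (y : L) :
    ⁅gaudinHamiltonian n bas dbas z 0 i, inSummand n j y⁆ =
      (z i - z j)⁻¹ • ⁅splitCasimirIJ n bas dbas i j, inSummand n j y⁆ := by
  rw [gaudinHamiltonian_zero_eq_add_sum hij, add_lie, smul_lie, sum_lie, add_eq_left]
  refine Finset.sum_eq_zero fun k hk => ?_
  rw [smul_lie, (commute_inSummand_splitCasimirIJ hij.symm (Finset.ne_of_mem_erase hk).symm
    _).symm.lie_eq, smul_zero]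

variable [DecidableEq ιB]
  (hdual : ∀ a b : ιB, killingForm ℂ L (bas a) (dbas b) = if a = b then 1 else 0)
include hdual

theorem lie_gaudinHamiltonian_zero_inSummand_add {i j : Fin n} (hij : i ≠ j) (y : L) :
    ⁅gaudinHamiltonian n bas dbas z 0 i, inSummand n j y⁆ +
      ⁅inSummand n i y, gaudinHamiltonian n bas dbas z 0 j⁆ = 0 := by
  have hΩ := (commute_inSummand_add_inSummand_splitCasimirIJ hdual hij y).symm.lie_eq
  rw [lie_add] at hΩ
  rw [← lie_skew (inSummand n i y), lie_gaudinHamiltonian_zero_inSummand hij,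
    lie_gaudinHamiltonian_zero_inSummand hij.symm, ← splitCasimirIJ_comm hdual hij,
    show (z j - z i)⁻¹ = -(z i - z j)⁻¹ by rw [← neg_sub, inv_neg]]
  linear_combination (norm := module) (z i - z j)⁻¹ • hΩ

theorem lie_gaudinHamiltonian_three {i j k : Fin n} (hij : z i ≠ z j) (hik : z i ≠ z k)
    (hjk : z j ≠ z k) :
    ⁅(z i - z j)⁻¹ • splitCasimirIJ n bas dbas i j +
        (z i - z k)⁻¹ • splitCasimirIJ n bas dbas i k,
      (z j - z i)⁻¹ • splitCasimirIJ n bas dbas j i +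
        (z j - z k)⁻¹ • splitCasimirIJ n bas dbas j k⁆ = 0 := by
  have hij' := ne_of_apply_ne z hij
  have hik' := ne_of_apply_ne z hik
  have hjk' := ne_of_apply_ne z hjk
  set X := ⁅splitCasimirIJ n bas dbas i j, splitCasimirIJ n bas dbas i k⁆
  have hΩij_Ωji : ⁅splitCasimirIJ n bas dbas i j, splitCasimirIJ n bas dbas j i⁆ = 0 := by
    rw [← splitCasimirIJ_comm hdual hij', lie_self]
  have hΩij_Ωjk : ⁅splitCasimirIJ n bas dbas i j, splitCasimirIJ n bas dbas j k⁆ = -X := by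
    have := (commute_splitCasimirIJ_add_splitCasimirIJ hdual hij' hik' hjk').lie_eq
    rw [lie_add] at this
    exact eq_neg_of_add_eq_zero_right this
  have hΩik_Ωji : ⁅splitCasimirIJ n bas dbas i k, splitCasimirIJ n bas dbas j i⁆ = -X := by
    rw [← splitCasimirIJ_comm hdual hij', ← lie_skew]
  have hΩik_Ωjk : ⁅splitCasimirIJ n bas dbas i k, splitCasimirIJ n bas dbas j k⁆ = X := by
    have := (commute_splitCasimirIJ_add_splitCasimirIJ hdual hik' hij' hjk'.symm).lie_eq
    rw [lie_add, ← splitCasimirIJ_comm hdual hjk', ← lie_skew] at this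
    exact (neg_add_eq_zero.mp this).symm
  have hscal : -((z i - z j)⁻¹ * (z j - z k)⁻¹) - (z i - z k)⁻¹ * (z j - z i)⁻¹ +
      (z i - z k)⁻¹ * (z j - z k)⁻¹ = 0 := by
    have := sub_ne_zero.2 hij
    have := sub_ne_zero.2 hik
    have := sub_ne_zero.2 hjk
    have := sub_ne_zero.2 hij.symm
    field_simp
    ring
  simp only [add_lie, lie_add, smul_lie, lie_smul, hΩij_Ωji, hΩij_Ωjk, hΩik_Ωji, hΩik_Ωjk]
  linear_combination (norm := module) hscal • X

theorem lie_gaudinHamiltonian_zero (hz : Function.Injective z) {i j : Fin n} (hij : i ≠ j) :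
    ⁅gaudinHamiltonian n bas dbas z 0 i, gaudinHamiltonian n bas dbas z 0 j⁆ = 0 := by
  set s := (Finset.univ.erase i).erase j
  have hs : ∀ k ∈ s, i ≠ k ∧ j ≠ k := fun k hk =>
    ⟨(Finset.ne_of_mem_erase (Finset.mem_of_mem_erase hk)).symm,
      (Finset.ne_of_mem_erase hk).symm⟩
  have hdiag : ⁅(z i - z j)⁻¹ • splitCasimirIJ n bas dbas i j,
      (z j - z i)⁻¹ • splitCasimirIJ n bas dbas j i⁆ = 0 := by
    rw [← splitCasimirIJ_comm hdual hij, smul_lie, lie_smul, lie_self, smul_zero, smul_zero]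
  have hoff : ⁅∑ k ∈ s, (z i - z k)⁻¹ • splitCasimirIJ n bas dbas i k,
      ∑ k ∈ s, (z j - z k)⁻¹ • splitCasimirIJ n bas dbas j k⁆ =
      ∑ k ∈ s, ⁅(z i - z k)⁻¹ • splitCasimirIJ n bas dbas i k,
        (z j - z k)⁻¹ • splitCasimirIJ n bas dbas j k⁆ := by
    rw [sum_lie_sum]
    refine Finset.sum_congr rfl fun k hk => Finset.sum_eq_single_of_mem k hk fun l hl hlk => ?_
    rw [smul_lie, lie_smul, (commute_splitCasimirIJ_of_disjoint hij (hs l hl).1 (hs k hk).2.symm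
      (Ne.symm hlk)).lie_eq, smul_zero, smul_zero]
  rw [gaudinHamiltonian_zero_eq_add_sum hij, gaudinHamiltonian_zero_eq_add_sum hij.symm,
    Finset.erase_right_comm (a := j)]
  calc
    _ = ∑ k ∈ s, ⁅(z i - z j)⁻¹ • splitCasimirIJ n bas dbas i j +
          (z i - z k)⁻¹ • splitCasimirIJ n bas dbas i k,
          (z j - z i)⁻¹ • splitCasimirIJ n bas dbas j i +
            (z j - z k)⁻¹ • splitCasimirIJ n bas dbas j k⁆ := by
      rw [add_lie, lie_add, lie_add, hdiag, hoff, lie_sum, sum_lie]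
      simp only [add_lie, lie_add, hdiag, zero_add, Finset.sum_add_distrib]
      abel
    _ = 0 := Finset.sum_eq_zero fun k hk =>
      lie_gaudinHamiltonian_three hdual (hz.ne hij) (hz.ne (hs k hk).1) (hz.ne (hs k hk).2)

end Gaudin

theorem gaudinHamiltonians_commute_general
    (n : ℕ)
    {ιB : Type*} [Fintype ιB] [DecidableEq ιB]
    (bas : Module.Basis ιB ℂ L) (dbas : ιB → L)
    (hdual : ∀ a b : ιB, killingForm ℂ L (bas a) (dbas b) = if a = b then 1 else 0)
    (z : Fin n → ℂ) (hz : Function.Injective z) (χ : L) :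
    ∀ i j : Fin n,
      Commute (gaudinHamiltonian n bas dbas z χ i) (gaudinHamiltonian n bas dbas z χ j) := by
  intro i j
  rcases eq_or_ne i j with rfl | hij
  · exact .refl _
  rw [commute_iff_lie_eq, gaudinHamiltonian_eq_add_inSummand χ i,
    gaudinHamiltonian_eq_add_inSummand χ j]
  simp only [add_lie, lie_add, lie_gaudinHamiltonian_zero hdual hz hij,
    (commute_inSummand_of_ne hij χ χ).lie_eq]
  linear_combination (norm := module) lie_gaudinHamiltonian_zero_inSummand_add hdual hij χ

/-- Let `L` be a finite-dimensional semisimple complex Lie algebra, `(x_a)` a basis of `L`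
and `(x^a)` the dual basis with respect to the Killing form, `z_1, …, z_n` pairwise distinct
complex numbers and `χ ∈ L`.  Then the Gaudin Hamiltonians
`H_i = Σ_{j ≠ i} (z_i − z_j)⁻¹ Ω^{(ij)} + χ^{(i)}` pairwise commute in `U(L^{⊕n})`. -/
theorem gaudinHamiltonians_commute
    [Module.Finite ℂ L] [LieAlgebra.IsSemisimple ℂ L]
    (n : ℕ) (hn : 2 ≤ n)
    {ιB : Type*} [Fintype ιB] [DecidableEq ιB]
    (bas : Module.Basis ιB ℂ L) (dbas : ιB → L)
    (hdual : ∀ a b : ιB, killingForm ℂ L (bas a) (dbas b) = if a = b then 1 else 0)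
    (z : Fin n → ℂ) (hz : Function.Injective z) (χ : L) :
    ∀ i j : Fin n,
      Commute (gaudinHamiltonian n bas dbas z χ i) (gaudinHamiltonian n bas dbas z χ j) :=
  gaudinHamiltonians_commute_general n bas dbas hdual z hz χ
end
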